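/- arXiv:1806.01803 — 3 statements merged into one kernel-verified Lean document; each statement's English description precedes it below -/
import Mathlib

section
/- A finite set of n affine hyperplanes in R^m partitions R^m into at most r(m,n) = ∑_{i=0}^{m} C(n,i) connected regions (where C(n,i) = 0 for i > n). -/
/-!
The points with a given sign vector with respect to the hyperplanes form an open cell, which is
convex, hence connected and contained in the complement; so every region contains a cell and
distinct regions have distinct sign vectors. It therefore suffices to bound the number of sign
vectors realized by `n` affine functionals on a space of dimension `d` by
`r(d, n) = ∑_{i ≤ d} C(n, i)`. Forgetting the last functional `φ` loses at most the sign vectors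
whose cells lie on both sides of the hyperplane `φ = c`; each such cell meets that hyperplane,
so these are realized by the restricted arrangement in dimension `d - 1`. This gives
`r(d, n + 1) ≤ r(d, n) + r(d - 1, n)`, Pascal's rule for the partial row sums.
-/

open Finset

def openRay {α : Type*} [Preorder α] : Bool → α → Set α
  | true, c => Set.Ioi c
  | false, c => Set.Iio c

section openRay

variable {α : Type*}

lemma mem_openRay_decide [LinearOrder α] {c t : α} (h : t ≠ c) :
    t ∈ openRay (decide (c < t)) c := by
  by_cases hct : c < t
  · simp [openRay, hct]
  · simpa [openRay, hct] using lt_of_le_of_ne (not_lt.mp hct) h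

lemma ne_of_mem_openRay [Preorder α] {s : Bool} {c t : α} (h : t ∈ openRay s c) : t ≠ c := by
  cases s
  · exact (show t < c from h).ne
  · exact (show c < t from h).ne'

lemma lt_of_mem_openRay_false_of_mem_openRay_true [Preorder α] {c t t' : α}
    (ht : t ∈ openRay false c) (ht' : t' ∈ openRay true c) : t < t' :=
  (show t < c from ht).trans ht'

lemma sub_mem_openRay_sub_iff [AddCommGroup α] [PartialOrder α] [IsOrderedAddMonoid α]
    {s : Bool} {a c t : α} : t - a ∈ openRay s (c - a) ↔ t ∈ openRay s c := by
  cases s <;> simp [openRay]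

lemma convex_openRay {𝕜 : Type*} [Field 𝕜] [LinearOrder 𝕜] [IsStrictOrderedRing 𝕜]
    (s : Bool) (c : 𝕜) : Convex 𝕜 (openRay s c) := by
  cases s
  · exact convex_Iio c
  · exact convex_Ioi c

end openRay

def openCell {𝕜 E ι : Type*} [Field 𝕜] [LinearOrder 𝕜] [AddCommGroup E] [Module 𝕜 E]
    (f : ι → E →ₗ[𝕜] 𝕜) (b : ι → 𝕜) (s : ι → Bool) : Set E :=
  {x | ∀ i, f i x ∈ openRay (s i) (b i)}

def realizedSigns {𝕜 E ι : Type*} [Field 𝕜] [LinearOrder 𝕜] [AddCommGroup E] [Module 𝕜 E]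
    (f : ι → E →ₗ[𝕜] 𝕜) (b : ι → 𝕜) : Set (ι → Bool) :=
  {s | (openCell f b s).Nonempty}

def regionBound (d n : ℕ) : ℕ := ∑ i ∈ range (d + 1), n.choose i

lemma regionBound_zero_right (d : ℕ) : regionBound d 0 = 1 := by
  simp [regionBound, sum_range_succ']

lemma regionBound_le_succ_right (d n : ℕ) : regionBound d n ≤ regionBound d (n + 1) :=
  sum_le_sum fun i _ => Nat.choose_le_succ n i

lemma regionBound_succ_succ (d n : ℕ) :
    regionBound (d + 1) (n + 1) = regionBound (d + 1) n + regionBound d n := by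
  simp only [regionBound, sum_range_succ' _ (d + 1), Nat.choose_succ_succ, sum_add_distrib,
    Nat.choose_zero_right]
  ring

lemma ncard_eq_ncard_snoc_true_add_ncard_snoc_false {n : ℕ} (S : Set (Fin (n + 1) → Bool)) :
    S.ncard = {s | Fin.snoc s true ∈ S}.ncard + {s | Fin.snoc s false ∈ S}.ncard := by
  have hS : S = (Fin.snoc · true) '' {s | Fin.snoc s true ∈ S} ∪
      (Fin.snoc · false) '' {s | Fin.snoc s false ∈ S} := by
    ext s
    constructor
    · intro hs
      rw [← Fin.snoc_init_self s] at hs ⊢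
      generalize s (Fin.last n) = c at hs ⊢
      cases c
      · exact Or.inr ⟨_, hs, rfl⟩
      · exact Or.inl ⟨_, hs, rfl⟩
    · rintro (⟨s, hs, rfl⟩ | ⟨s, hs, rfl⟩) <;> exact hs
  have hdisj : Disjoint ((Fin.snoc · true) '' {s | Fin.snoc s true ∈ S})
      ((Fin.snoc · false) '' {s | Fin.snoc s false ∈ S} : Set (Fin (n + 1) → Bool)) := by
    rw [Set.disjoint_left]
    rintro _ ⟨s, -, rfl⟩ ⟨s', -, h⟩
    simpa using congrFun h (Fin.last n)
  conv_lhs => rw [hS]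
  rw [Set.ncard_union_eq hdisj,
    Set.ncard_image_of_injective _ (Fin.snoc_left_injective (α := fun _ => Bool) true),
    Set.ncard_image_of_injective _ (Fin.snoc_left_injective (α := fun _ => Bool) false)]

section Arrangement

variable {𝕜 E : Type*} [Field 𝕜] [LinearOrder 𝕜] [AddCommGroup E] [Module 𝕜 E]

lemma convex_openCell [IsStrictOrderedRing 𝕜] {ι : Type*} (f : ι → E →ₗ[𝕜] 𝕜) (b : ι → 𝕜)
    (s : ι → Bool) : Convex 𝕜 (openCell f b s) := by
  have : openCell f b s = ⋂ i, f i ⁻¹' openRay (s i) (b i) := by ext; simp [openCell]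
  rw [this]
  exact convex_iInter fun i => (convex_openRay (s i) (b i)).linear_preimage (f i)

lemma mem_openCell_snoc_iff {n : ℕ} {f : Fin (n + 1) → E →ₗ[𝕜] 𝕜} {b : Fin (n + 1) → 𝕜}
    {s : Fin n → Bool} {c : Bool} {x : E} :
    x ∈ openCell f b (Fin.snoc s c) ↔
      x ∈ openCell (fun i => f i.castSucc) (fun i => b i.castSucc) s ∧
        f (Fin.last n) x ∈ openRay c (b (Fin.last n)) := by
  simp [openCell, Fin.forall_fin_succ']

lemma realizedSigns_snoc_subset {n : ℕ} (f : Fin (n + 1) → E →ₗ[𝕜] 𝕜) (b : Fin (n + 1) → 𝕜)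
    (c : Bool) : {s | Fin.snoc s c ∈ realizedSigns f b} ⊆
      realizedSigns (fun i => f i.castSucc) (fun i => b i.castSucc) :=
  fun _ ⟨x, hx⟩ => ⟨x, (mem_openCell_snoc_iff.mp hx).1⟩

/- The hyperplane `φ = φ p` is identified with `ker φ` through `z ↦ z - p`. -/
lemma mem_realizedSigns_ker_of_mem_openCell [IsStrictOrderedRing 𝕜] {ι : Type*}
    {f : ι → E →ₗ[𝕜] 𝕜} {b : ι → 𝕜} {s : ι → Bool} (φ : E →ₗ[𝕜] 𝕜) {p x y : E}
    (hx : x ∈ openCell f b s) (hy : y ∈ openCell f b s) (hxp : φ x ≤ φ p) (hpy : φ p ≤ φ y) :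
    s ∈ realizedSigns (fun i => (f i).comp (LinearMap.ker φ).subtype) (fun i => b i - f i p) := by
  obtain ⟨z, hz, hφz⟩ : φ p ∈ φ '' segment 𝕜 x y := by
    have h := image_segment 𝕜 φ.toAffineMap x y
    rw [LinearMap.coe_toAffineMap] at h
    rw [h, segment_eq_Icc (hxp.trans hpy)]
    exact ⟨hxp, hpy⟩
  have hzs : z ∈ openCell f b s := (convex_openCell f b s).segment_subset hx hy hz
  refine ⟨⟨z - p, by simp [hφz]⟩, fun i => ?_⟩
  simpa [sub_mem_openRay_sub_iff] using hzs i

end Arrangement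

theorem ncard_realizedSigns_le {𝕜 : Type*} [Field 𝕜] [LinearOrder 𝕜] [IsStrictOrderedRing 𝕜] :
    ∀ {n : ℕ} {E : Type*} [AddCommGroup E] [Module 𝕜 E] [FiniteDimensional 𝕜 E]
      (f : Fin n → E →ₗ[𝕜] 𝕜) (b : Fin n → 𝕜),
      (realizedSigns f b).ncard ≤ regionBound (Module.finrank 𝕜 E) n
  | 0, _, _, _, _, f, b =>
    (Set.ncard_le_one_of_subsingleton _).trans (regionBound_zero_right _).ge
  | n + 1, E, _, _, _, f, b => by
    set φ := f (Fin.last n)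
    set S := realizedSigns f b
    have hunion : ({s | Fin.snoc s true ∈ S} ∪ {s | Fin.snoc s false ∈ S}).ncard ≤
        regionBound (Module.finrank 𝕜 E) n :=
      (Set.ncard_le_ncard (Set.union_subset (realizedSigns_snoc_subset f b true)
        (realizedSigns_snoc_subset f b false))).trans (ncard_realizedSigns_le _ _)
    rw [ncard_eq_ncard_snoc_true_add_ncard_snoc_false, ← Set.ncard_union_add_ncard_inter]
    rcases eq_or_ne φ 0 with hφ | hφ
    · have hinter : {s | Fin.snoc s true ∈ S} ∩ {s | Fin.snoc s false ∈ S} = ∅ := by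
        ext s
        simp only [Set.mem_inter_iff, Set.mem_ofPred_eq, Set.mem_empty_iff_false, iff_false]
        rintro ⟨⟨x, hx⟩, ⟨y, hy⟩⟩
        have := lt_of_mem_openRay_false_of_mem_openRay_true (mem_openCell_snoc_iff.mp hy).2
          (mem_openCell_snoc_iff.mp hx).2
        simp [φ, hφ] at this
      rw [hinter, Set.ncard_empty, add_zero]
      exact hunion.trans (regionBound_le_succ_right _ _)
    · obtain ⟨p, hp⟩ := LinearMap.surjective_iff_ne_zero.mpr hφ (b (Fin.last n))
      have hinter : {s | Fin.snoc s true ∈ S} ∩ {s | Fin.snoc s false ∈ S} ⊆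
          realizedSigns (fun i => (f i.castSucc).comp (LinearMap.ker φ).subtype)
            (fun i => b i.castSucc - f i.castSucc p) := by
        rintro s ⟨⟨x, hx⟩, ⟨y, hy⟩⟩
        rw [mem_openCell_snoc_iff] at hx hy
        exact mem_realizedSigns_ker_of_mem_openCell φ hy.1 hx.1 (hp ▸ hy.2.le) (hp ▸ hx.2.le)
      rw [← Module.Dual.finrank_ker_add_one_of_ne_zero hφ] at hunion ⊢
      rw [regionBound_succ_succ]
      exact add_le_add hunion
        ((Set.ncard_le_ncard hinter).trans (ncard_realizedSigns_le _ _))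

lemma ncard_connectedComponentIn_le_of_subset_biUnion {X ι : Type*} [TopologicalSpace X]
    {U : Set X} {S : Set ι} (K : ι → Set X) (hS : S.Finite)
    (hK : ∀ i ∈ S, IsPreconnected (K i)) (hKU : ∀ i ∈ S, K i ⊆ U) (hUK : U ⊆ ⋃ i ∈ S, K i) :
    {C | ∃ x ∈ U, C = connectedComponentIn U x}.ncard ≤ S.ncard := by
  set g : ι → Set X := fun i => Classical.epsilon fun C => ∃ x ∈ K i, C = connectedComponentIn U x
  suffices h : {C | ∃ x ∈ U, C = connectedComponentIn U x} ⊆ g '' S from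
    (Set.ncard_le_ncard h (hS.image g)).trans (Set.ncard_image_le hS)
  rintro _ ⟨x, hxU, rfl⟩
  obtain ⟨i, hi, hxi⟩ := Set.mem_iUnion₂.mp (hUK hxU)
  obtain ⟨y, hyi, hgy⟩ : ∃ y ∈ K i, g i = connectedComponentIn U y :=
    Classical.epsilon_spec (p := fun C => ∃ y ∈ K i, C = connectedComponentIn U y)
      ⟨_, x, hxi, rfl⟩
  have hyx : y ∈ connectedComponentIn U x :=
    (hK i hi).subset_connectedComponentIn hxi (hKU i hi) hyi
  exact ⟨i, hi, hgy.trans (connectedComponentIn_eq hyx).symm⟩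

theorem affine_arrangement_region_bound_general (m n : ℕ)
    (a : Fin n → Fin m → ℝ) (b : Fin n → ℝ) :
    {C : Set (Fin m → ℝ) |
        ∃ x ∈ {x : Fin m → ℝ | ∀ i, ∑ j, a i j * x j ≠ b i},
          C = connectedComponentIn {x : Fin m → ℝ | ∀ i, ∑ j, a i j * x j ≠ b i} x}.ncard
      ≤ ∑ i ∈ Finset.range (m + 1), n.choose i := by
  set f : Fin n → (Fin m → ℝ) →ₗ[ℝ] ℝ := fun i => dotProductBilin ℝ ℝ (a i)
  change {C | ∃ x ∈ {x | ∀ i, f i x ≠ b i}, C = connectedComponentIn {x | ∀ i, f i x ≠ b i} x}.ncard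
    ≤ _
  calc _ ≤ (realizedSigns f b).ncard :=
        ncard_connectedComponentIn_le_of_subset_biUnion (openCell f b) (Set.toFinite _)
          (fun s _ => (convex_openCell f b s).isPreconnected)
          (fun s _ x hx i => ne_of_mem_openRay (hx i))
          (fun x hx => Set.mem_biUnion (x := fun i => decide (b i < f i x))
            ⟨x, fun i => mem_openRay_decide (hx i)⟩ fun i => mem_openRay_decide (hx i))
    _ ≤ regionBound (Module.finrank ℝ (Fin m → ℝ)) n := ncard_realizedSigns_le f b
    _ = _ := by simp [regionBound]

/-- A finite set of `n` affine hyperplanes in `ℝ^m` partitions `ℝ^m` into at most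
`r(m,n) = ∑_{i=0}^{m} C(n,i)` connected regions. -/
theorem affine_arrangement_region_bound (m n : ℕ)
    (a : Fin n → Fin m → ℝ) (b : Fin n → ℝ) (ha : ∀ i, a i ≠ 0) :
    {C : Set (Fin m → ℝ) |
        ∃ x ∈ {x : Fin m → ℝ | ∀ i, ∑ j, a i j * x j ≠ b i},
          C = connectedComponentIn {x : Fin m → ℝ | ∀ i, ∑ j, a i j * x j ≠ b i} x}.ncard
      ≤ ∑ i ∈ Finset.range (m + 1), n.choose i :=
  affine_arrangement_region_bound_general m n a b
end

section
/- A finite set of n linear hyperplanes in R^m (all passing through the origin), with n ≥ 1, partitions R^m into at most r_0(n,m) = 2 ∑_{i=0}^{m-1} C(n-1,i) connected regions. -/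
/-!
Points of the complement with the same sign vector lie in a common open convex cell, hence in
the same region, so it suffices to count the sign vectors realised on a subspace `W`. Delete the
last hyperplane `H`: a sign vector of the smaller arrangement extends in at most two ways, and
if it extends in both, the segment joining two witnesses crosses `H` inside their common cell,
so it is realised on `W ∩ H`. Induction on the number of hyperplanes and Pascal's rule give
`2 ∑_{i < dim W} C(n - 1, i)`.
-/

open Set Finset Module

lemma Nat.sum_range_succ_choose (n d : ℕ) :
    ∑ i ∈ range d, (n + 1).choose i =
      ∑ i ∈ range d, n.choose i + ∑ i ∈ range (d - 1), n.choose i := by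
  cases d with
  | zero => simp
  | succ d =>
    simp only [Finset.sum_range_succ' _ d, Nat.choose_succ_succ', Finset.sum_add_distrib,
      Nat.add_sub_cancel, Nat.choose_zero_right]
    omega

lemma Set.ncard_image_le_ncard_image_of_factorsThrough {α β γ : Type*} {s : Set α}
    {f : α → β} {g : α → γ} (hg : (g '' s).Finite) (h : ∀ x ∈ s, ∀ y ∈ s, g x = g y → f x = f y) :
    (f '' s).ncard ≤ (g '' s).ncard := by
  cases isEmpty_or_nonempty α
  · simp [s.eq_empty_of_isEmpty]
  have hsub : f '' s ⊆ (f ∘ Function.invFunOn g s) '' (g '' s) := by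
    rintro _ ⟨x, hx, rfl⟩
    have hgx : g x ∈ g '' s := mem_image_of_mem g hx
    exact ⟨g x, hgx, h _ (Function.invFunOn_mem hgx) x hx (Function.invFunOn_eq hgx)⟩
  exact (Set.ncard_le_ncard hsub (hg.image _)).trans (Set.ncard_image_le hg)

lemma Set.ncard_le_ncard_add_ncard_of_mapsTo_init {n : ℕ} {A : Set (Fin (n + 1) → Bool)}
    {B D : Set (Fin n → Bool)} (hB : MapsTo Fin.init A B)
    (hD : ∀ t, Fin.snoc (α := fun _ ↦ Bool) t true ∈ A →
      Fin.snoc (α := fun _ ↦ Bool) t false ∈ A → t ∈ D) :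
    A.ncard ≤ B.ncard + D.ncard := by
  set I : Bool → Set (Fin n → Bool) := fun b ↦ {t | Fin.snoc (α := fun _ ↦ Bool) t b ∈ A}
  have hA : A ⊆ (Fin.snoc · true) '' I true ∪ (Fin.snoc · false) '' I false := by
    intro s hs
    have hs' : Fin.snoc (α := fun _ ↦ Bool) (Fin.init s) (s (Fin.last n)) ∈ A := by
      rwa [Fin.snoc_init_self]
    cases h : s (Fin.last n)
    · exact Or.inr ⟨Fin.init s, by simpa [I, h] using hs', by simp [← h]⟩
    · exact Or.inl ⟨Fin.init s, by simpa [I, h] using hs', by simp [← h]⟩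
  have hI : I true ∪ I false ⊆ B := by
    rintro t (ht | ht) <;> simpa using hB ht
  calc A.ncard ≤ (I true).ncard + (I false).ncard :=
        (ncard_le_ncard hA).trans <| (ncard_union_le _ _).trans <|
          add_le_add ncard_image_le ncard_image_le
    _ = (I true ∪ I false).ncard + (I true ∩ I false).ncard :=
        (ncard_union_add_ncard_inter _ _).symm
    _ ≤ B.ncard + D.ncard :=
        add_le_add (ncard_le_ncard hI) (ncard_le_ncard fun t ht ↦ hD t ht.1 ht.2)

section SignPatterns

variable {𝕜 V ι : Type*} [Field 𝕜] [LinearOrder 𝕜] [AddCommGroup V] [Module 𝕜 V]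

def arrangementComplement (f : ι → V →ₗ[𝕜] 𝕜) : Set V := {x | ∀ i, f i x ≠ 0}

def signVector (f : ι → V →ₗ[𝕜] 𝕜) (x : V) : ι → Bool := fun i ↦ decide (0 < f i x)

def signPatterns (f : ι → V →ₗ[𝕜] 𝕜) (W : Submodule 𝕜 V) : Set (ι → Bool) :=
  signVector f '' (W ∩ arrangementComplement f)

lemma signPatterns_eq_empty_of_le_ker {f : ι → V →ₗ[𝕜] 𝕜} {W : Submodule 𝕜 V} (i : ι)
    (h : W ≤ LinearMap.ker (f i)) : signPatterns f W = ∅ :=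
  eq_empty_iff_forall_notMem.2 fun _ ⟨_, ⟨hxW, hx⟩, _⟩ ↦ hx i (h hxW)

variable {n : ℕ} {f : Fin (n + 1) → V →ₗ[𝕜] 𝕜} {W : Submodule 𝕜 V}

lemma mapsTo_init_signPatterns :
    MapsTo Fin.init (signPatterns f W) (signPatterns (Fin.init f) W) :=
  fun _ ⟨x, ⟨hxW, hx⟩, hxs⟩ ↦ ⟨x, ⟨hxW, fun i ↦ hx i.castSucc⟩, hxs ▸ rfl⟩

variable [IsStrictOrderedRing 𝕜]

lemma add_ne_zero_and_pos_iff_of_pos_iff {p q a b : 𝕜} (hp : p ≠ 0) (hq : q ≠ 0)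
    (hpq : 0 < p ↔ 0 < q) (ha : 0 < a) (hb : 0 < b) :
    a * p + b * q ≠ 0 ∧ (0 < a * p + b * q ↔ 0 < p) := by
  rcases hp.lt_or_gt with hp | hp
  · have hq : q < 0 := hq.lt_of_le (not_lt.1 fun h ↦ hp.not_gt (hpq.2 h))
    have : a * p + b * q < 0 := by nlinarith
    exact ⟨this.ne, by constructor <;> intro <;> linarith⟩
  · have hq : 0 < q := hpq.1 hp
    have : 0 < a * p + b * q := by nlinarith
    exact ⟨this.ne', by simp [this, hp]⟩

theorem convex_signCell (f : ι → V →ₗ[𝕜] 𝕜) (s : ι → Bool) :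
    Convex 𝕜 (arrangementComplement f ∩ signVector f ⁻¹' {s}) := by
  refine convex_iff_forall_pos.2 fun x ⟨hx, hxs⟩ y ⟨hy, hys⟩ a b ha hb _ ↦ ?_
  have hxy : ∀ i, 0 < f i x ↔ 0 < f i y := fun i ↦ by
    simpa [signVector] using (congrFun hxs i).trans (congrFun hys i).symm
  have key i := add_ne_zero_and_pos_iff_of_pos_iff (hx i) (hy i) (hxy i) ha hb
  refine ⟨fun i ↦ by simpa using (key i).1, ?_⟩
  rw [← hxs]
  funext i
  simpa [signVector] using (key i).2

lemma mem_signPatterns_inf_ker {t : Fin n → Bool}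
    (htrue : Fin.snoc (α := fun _ ↦ Bool) t true ∈ signPatterns f W)
    (hfalse : Fin.snoc (α := fun _ ↦ Bool) t false ∈ signPatterns f W) :
    t ∈ signPatterns (Fin.init f) (W ⊓ LinearMap.ker (f (Fin.last n))) := by
  obtain ⟨x, ⟨hxW, hx⟩, hxs⟩ := htrue
  obtain ⟨y, ⟨hyW, hy⟩, hys⟩ := hfalse
  have hxpos : 0 < f (Fin.last n) x := by simpa [signVector] using congrFun hxs (Fin.last n)
  have hyneg : f (Fin.last n) y < 0 := by
    have := congrFun hys (Fin.last n)
    simp only [signVector, Fin.snoc_last, decide_eq_false_iff_not, not_lt] at this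
    exact this.lt_of_ne (hy _)
  have hcell : ∀ z b, z ∈ arrangementComplement f →
      signVector f z = Fin.snoc (α := fun _ ↦ Bool) t b →
        z ∈ arrangementComplement (Fin.init f) ∩ signVector (Fin.init f) ⁻¹' {t} :=
    fun z b hz hzs ↦ ⟨fun i ↦ hz i.castSucc, show Fin.init (signVector f z) = t by simp [hzs]⟩
  obtain ⟨z, hz, hz0⟩ : ∃ z ∈ segment 𝕜 x y, f (Fin.last n) z = 0 := by
    have : (0 : 𝕜) ∈ segment 𝕜 (f (Fin.last n) x) (f (Fin.last n) y) := by
      rw [segment_eq_uIcc]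
      exact mem_uIcc.2 (Or.inr ⟨hyneg.le, hxpos.le⟩)
    rwa [← LinearMap.coe_toAffineMap, ← image_segment] at this
  obtain ⟨hzc, hzt⟩ :=
    (convex_signCell (Fin.init f) t).segment_subset (hcell x _ hx hxs) (hcell y _ hy hys) hz
  exact ⟨z, ⟨⟨W.convex.segment_subset hxW hyW hz, hz0⟩, hzc⟩, hzt⟩

end SignPatterns

theorem ncard_signPatterns_le {𝕜 V : Type*} [Field 𝕜] [LinearOrder 𝕜] [IsStrictOrderedRing 𝕜]
    [AddCommGroup V] [Module 𝕜 V] [FiniteDimensional 𝕜 V] (n : ℕ) (f : Fin (n + 1) → V →ₗ[𝕜] 𝕜)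
    (W : Submodule 𝕜 V) :
    (signPatterns f W).ncard ≤ 2 * ∑ i ∈ range (finrank 𝕜 W), n.choose i := by
  induction n generalizing W with
  | zero =>
    by_cases hW : W ≤ LinearMap.ker (f 0)
    · simp [signPatterns_eq_empty_of_le_ker 0 hW]
    obtain ⟨d, hd⟩ : ∃ d, finrank 𝕜 W = d + 1 :=
      Nat.exists_eq_succ_of_ne_zero fun h ↦ hW (Submodule.finrank_eq_zero.1 h ▸ bot_le)
    calc (signPatterns f W).ncard ≤ Nat.card (Fin 1 → Bool) := ncard_le_card _
      _ = 2 * ∑ i ∈ range (finrank 𝕜 W), Nat.choose 0 i := by simp [hd, sum_range_succ']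
  | succ n ih =>
    by_cases hW : W ≤ LinearMap.ker (f (Fin.last _))
    · simp [signPatterns_eq_empty_of_le_ker _ hW]
    have hK : finrank 𝕜 ↥(W ⊓ LinearMap.ker (f (Fin.last _))) ≤ finrank 𝕜 W - 1 :=
      Nat.le_sub_one_of_lt (Submodule.finrank_lt_finrank_of_lt (inf_lt_left.2 hW))
    calc (signPatterns f W).ncard
        ≤ (signPatterns (Fin.init f) W).ncard +
          (signPatterns (Fin.init f) (W ⊓ LinearMap.ker (f (Fin.last _)))).ncard :=
          ncard_le_ncard_add_ncard_of_mapsTo_init mapsTo_init_signPatterns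
            fun _ ↦ mem_signPatterns_inf_ker
      _ ≤ 2 * ∑ i ∈ range (finrank 𝕜 W), n.choose i +
          2 * ∑ i ∈ range (finrank 𝕜 W - 1), n.choose i := by
          gcongr
          · exact ih _ W
          · exact (ih _ _).trans (by gcongr)
      _ = 2 * ∑ i ∈ range (finrank 𝕜 W), (n + 1).choose i := by
          rw [Nat.sum_range_succ_choose]; ring

theorem connectedComponentIn_eq_of_signVector_eq {V ι : Type*} [AddCommGroup V] [Module ℝ V]
    [TopologicalSpace V] [IsTopologicalAddGroup V] [ContinuousSMul ℝ V] (f : ι → V →ₗ[ℝ] ℝ)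
    {x y : V} (hx : x ∈ arrangementComplement f) (hy : y ∈ arrangementComplement f)
    (hxy : signVector f x = signVector f y) :
    connectedComponentIn (arrangementComplement f) x =
      connectedComponentIn (arrangementComplement f) y :=
  connectedComponentIn_eq <|
    (convex_signCell f (signVector f x)).isPreconnected.subset_connectedComponentIn
      ⟨hx, rfl⟩ inter_subset_left ⟨hy, hxy.symm⟩

theorem central_arrangement_region_bound_general (m n : ℕ) (hn : 1 ≤ n)
    (a : Fin n → Fin m → ℝ) :
    {C : Set (Fin m → ℝ) |
        ∃ x ∈ {x : Fin m → ℝ | ∀ i, ∑ j, a i j * x j ≠ 0},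
          C = connectedComponentIn {x : Fin m → ℝ | ∀ i, ∑ j, a i j * x j ≠ 0} x}.ncard
      ≤ 2 * ∑ i ∈ Finset.range m, (n - 1).choose i := by
  obtain ⟨n, rfl⟩ := Nat.exists_eq_add_of_le' hn
  let f : Fin (n + 1) → (Fin m → ℝ) →ₗ[ℝ] ℝ :=
    fun i ↦ (LinearMap.proj i).comp (Matrix.of a).mulVecLin
  -- `f i x` unfolds to `∑ j, a i j * x j`
  change {C | ∃ x ∈ arrangementComplement f,
    C = connectedComponentIn (arrangementComplement f) x}.ncard ≤ _
  calc _ = (connectedComponentIn (arrangementComplement f) '' arrangementComplement f).ncard := by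
        congr 1
        ext C
        exact exists_congr fun x ↦ and_congr_right fun _ ↦ eq_comm
    _ ≤ (signVector f '' arrangementComplement f).ncard :=
        ncard_image_le_ncard_image_of_factorsThrough (toFinite _)
          fun _ hx _ hy ↦ connectedComponentIn_eq_of_signVector_eq f hx hy
    _ ≤ 2 * ∑ i ∈ range (finrank ℝ (⊤ : Submodule ℝ (Fin m → ℝ))), n.choose i := by
        simpa [signPatterns] using ncard_signPatterns_le n f ⊤
    _ = 2 * ∑ i ∈ Finset.range m, (n + 1 - 1).choose i := by simp

/-- A finite set of `n ≥ 1` linear hyperplanes through the origin in `ℝ^m` partitions `ℝ^m`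
into at most `r₀(n,m) = 2 ∑_{i=0}^{m-1} C(n-1,i)` connected regions. -/
theorem central_arrangement_region_bound (m n : ℕ) (hn : 1 ≤ n)
    (a : Fin n → Fin m → ℝ) (ha : ∀ i, a i ≠ 0) :
    {C : Set (Fin m → ℝ) |
        ∃ x ∈ {x : Fin m → ℝ | ∀ i, ∑ j, a i j * x j ≠ 0},
          C = connectedComponentIn {x : Fin m → ℝ | ∀ i, ∑ j, a i j * x j ≠ 0} x}.ncard
      ≤ 2 * ∑ i ∈ Finset.range m, (n - 1).choose i :=
  central_arrangement_region_bound_general m n hn a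
end

section
/- Let A be an arrangement of n hyperplanes in R^m given by rows of a full-row-rank system. If every m × m submatrix of the n × m normal matrix A has nonzero determinant (general position) and n ≥ m, then the arrangement attains exactly ∑_{i=0}^{m} C(n,i) regions provided additionally no point lies on more than m hyperplanes. -/
/-!
Label each point off all hyperplanes by the set of hyperplanes on whose positive side it lies.
The points with a given label form a convex cell, and an affine functional that does not vanish
on a connected set keeps its sign there, so the regions are exactly the nonempty cells.

Let `r(I, A)` be the number of labels realized inside an affine subspace `A` by the hyperplanes
in `I`. Removing a hyperplane `H_p` merges two labels exactly when the common cell of the smaller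
arrangement crosses `H_p`: a point of `H_p` can be pushed off to either side, and conversely the
segment joining the two sides meets `H_p` inside the convex cell. Hence
`r(I, A) = r(I \ {p}, A) + r(I \ {p}, A ∩ H_p)`. General position of dimension `d` on `A`, i.e.
the zero sets of points of `A` being exactly the subsets of size at most `d`, passes to `A ∩ H_p`
with dimension `d - 1`, and Pascal's rule solves the recurrence with `∑_{k ≤ d} C(|I|, k)`.
-/

open Finset Filter Topology Set

theorem Nat.sum_range_succ_choose_succ (n d : ℕ) :
    ∑ k ∈ range (d + 1), (n + 1).choose k
      = ∑ k ∈ range (d + 1), n.choose k + ∑ k ∈ range d, n.choose k := by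
  simp only [sum_range_succ' _ d, Nat.choose_succ_succ', sum_add_distrib, Nat.choose_zero_right]
  ring

theorem Matrix.mulVec_surjective_of_linearIndependent_row {K m n : Type*} [Field K] [Fintype m]
    [Fintype n] {M : Matrix m n K} (hM : LinearIndependent K M.row) :
    Function.Surjective M.mulVec := by
  have hrange : LinearMap.range M.mulVecLin = ⊤ := Submodule.eq_top_of_finrank_eq <| by
    rw [← Matrix.rank, hM.rank_matrix, Module.finrank_fintype_fun_eq_card]
  exact LinearMap.range_eq_top.1 hrange

theorem exists_forall_dotProduct_eq {K ι κ : Type*} [Field K] [Fintype ι] [Fintype κ]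
    {a : ι → κ → K} (hcard : Fintype.card κ ≤ Fintype.card ι)
    (ha : ∀ s : Finset ι, s.card = Fintype.card κ → LinearIndependent K (fun i : s => a i))
    {s : Finset ι} (hs : s.card ≤ Fintype.card κ) (c : ι → K) :
    ∃ x, ∀ i ∈ s, a i ⬝ᵥ x = c i := by
  obtain ⟨t, hst, -, ht⟩ := exists_subsuperset_card_eq (subset_univ s) hs (by simpa using hcard)
  have hrows : LinearIndependent K (Matrix.of fun i : s => a i).row :=
    (ha t ht).comp (fun i : s => (⟨i, hst i.2⟩ : t)) fun i j h => Subtype.ext (Subtype.mk.inj h)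
  obtain ⟨x, hx⟩ := Matrix.mulVec_surjective_of_linearIndependent_row hrows fun i => c i
  exact ⟨x, fun i hi => congrFun hx ⟨i, hi⟩⟩

theorem IsPreconnected.pos_of_forall_ne_zero {X : Type*} [TopologicalSpace X] {C : Set X}
    (hC : IsPreconnected C) {g : X → ℝ} (hg : ContinuousOn g C) (h0 : ∀ z ∈ C, g z ≠ 0)
    {x y : X} (hx : x ∈ C) (hy : y ∈ C) (hgx : 0 < g x) : 0 < g y := by
  by_contra hgy
  obtain ⟨z, hz, hgz⟩ := hC.intermediate_value hy hx hg ⟨not_lt.1 hgy, hgx.le⟩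
  exact h0 z hz hgz

theorem AffineMap.continuous_apply_lineMap {E : Type*} [AddCommGroup E] [Module ℝ E]
    (g : E →ᵃ[ℝ] ℝ) (x y : E) : Continuous fun t : ℝ => g (AffineMap.lineMap x y t) := by
  simp only [AffineMap.apply_lineMap]
  exact AffineMap.lineMap_continuous

namespace HyperplaneArrangement

variable {ι E : Type*} [AddCommGroup E] [Module ℝ E] (f : ι → E →ᵃ[ℝ] ℝ)

def hyperplane (g : E →ᵃ[ℝ] ℝ) : AffineSubspace ℝ E := (affineSpan ℝ {0}).comap g

def offHyperplanes (I : Finset ι) : Set E := {x | ∀ i ∈ I, f i x ≠ 0}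

noncomputable def zeroSet (I : Finset ι) (x : E) : Finset ι := {i ∈ I | f i x = 0}

noncomputable def signSet (I : Finset ι) (x : E) : Finset ι := {i ∈ I | 0 < f i x}

def cell [DecidableEq ι] (I T : Finset ι) : Set E :=
  ⋂ i ∈ I, f i ⁻¹' if i ∈ T then Ioi 0 else Iio 0

def chamberSigns (I : Finset ι) (S : Set E) : Set (Finset ι) :=
  signSet f I '' (S ∩ offHyperplanes f I)

structure IsGenericOn (I : Finset ι) (A : Set E) (d : ℕ) : Prop where
  exists_zeroSet_eq : ∀ s ⊆ I, s.card ≤ d → ∃ x ∈ A, zeroSet f I x = s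
  card_zeroSet_le : ∀ x ∈ A, (zeroSet f I x).card ≤ d

variable {f}

@[simp]
theorem mem_hyperplane {g : E →ᵃ[ℝ] ℝ} {x : E} : x ∈ hyperplane g ↔ g x = 0 := by
  simp [hyperplane, AffineSubspace.mem_comap, AffineSubspace.mem_affineSpan_singleton]

theorem mem_offHyperplanes_insert [DecidableEq ι] {p : ι} {I : Finset ι} {x : E} :
    x ∈ offHyperplanes f (insert p I) ↔ f p x ≠ 0 ∧ x ∈ offHyperplanes f I :=
  forall_mem_insert _ _ _

theorem signSet_insert [DecidableEq ι] (p : ι) (I : Finset ι) (x : E) :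
    signSet f (insert p I) x = if 0 < f p x then insert p (signSet f I x) else signSet f I x :=
  filter_insert _ _ _

theorem zeroSet_insert [DecidableEq ι] (p : ι) (I : Finset ι) (x : E) :
    zeroSet f (insert p I) x = if f p x = 0 then insert p (zeroSet f I x) else zeroSet f I x :=
  filter_insert _ _ _

theorem mem_zeroSet {I : Finset ι} {x : E} {i : ι} : i ∈ zeroSet f I x ↔ i ∈ I ∧ f i x = 0 :=
  mem_filter

theorem mem_signSet {I : Finset ι} {x : E} {i : ι} : i ∈ signSet f I x ↔ i ∈ I ∧ 0 < f i x :=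
  mem_filter

theorem signSet_subset (I : Finset ι) (x : E) : signSet f I x ⊆ I := filter_subset _ _

theorem zeroSet_subset (I : Finset ι) (x : E) : zeroSet f I x ⊆ I := filter_subset _ _

theorem convex_cell [DecidableEq ι] (I T : Finset ι) : Convex ℝ (cell f I T) :=
  convex_iInter₂ fun i _ => Convex.affine_preimage _ <| by
    split_ifs
    exacts [convex_Ioi 0, convex_Iio 0]

theorem cell_subset_offHyperplanes [DecidableEq ι] (I T : Finset ι) :
    cell f I T ⊆ offHyperplanes f I := by
  intro x hx i hi
  have := mem_iInter₂.1 hx i hi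
  split_ifs at this with h
  exacts [ne_of_gt this, ne_of_lt this]

theorem signSet_eq_of_mem_cell [DecidableEq ι] {I T : Finset ι} (hT : T ⊆ I) {x : E}
    (hx : x ∈ cell f I T) :
    signSet f I x = T := by
  ext i
  simp only [mem_signSet]
  constructor
  · rintro ⟨hi, hpos⟩
    by_contra hiT
    have := mem_iInter₂.1 hx i hi
    simp only [hiT, if_false, Set.mem_preimage, Set.mem_Iio] at this
    linarith
  · intro hiT
    have := mem_iInter₂.1 hx i (hT hiT)
    simp only [hiT, if_true, Set.mem_preimage, Set.mem_Ioi] at this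
    exact ⟨hT hiT, this⟩

theorem mem_cell_signSet [DecidableEq ι] {I : Finset ι} {x : E}
    (hx : x ∈ offHyperplanes f I) :
    x ∈ cell f I (signSet f I x) := by
  refine mem_iInter₂.2 fun i hi => ?_
  simp only [mem_signSet, hi, true_and]
  split_ifs with h
  exacts [h, lt_of_le_of_ne (not_lt.1 h) (hx i hi)]

theorem eventually_lineMap_mem_offHyperplanes {J : Finset ι} {x : E}
    (hx : x ∈ offHyperplanes f J) (y : E) :
    ∀ᶠ t in 𝓝 (0 : ℝ), AffineMap.lineMap x y t ∈ offHyperplanes f J ∧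
      signSet f J (AffineMap.lineMap x y t) = signSet f J x := by
  have hsign : ∀ i ∈ J, ∀ᶠ t in 𝓝 (0 : ℝ), f i (AffineMap.lineMap x y t) ≠ 0 ∧
      (0 < f i (AffineMap.lineMap x y t) ↔ 0 < f i x) := by
    intro i hi
    have hc := (f i).continuous_apply_lineMap x y
    have h0 : f i (AffineMap.lineMap x y (0 : ℝ)) = f i x := by simp
    rcases (hx i hi).lt_or_gt with hneg | hpos
    · filter_upwards [hc.continuousAt.eventually_lt continuousAt_const (h0 ▸ hneg)] with t ht
      exact ⟨ht.ne, by constructor <;> intro <;> linarith⟩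
    · filter_upwards [continuousAt_const.eventually_lt hc.continuousAt (h0 ▸ hpos)] with t ht
      exact ⟨ht.ne', by constructor <;> intro <;> linarith⟩
  filter_upwards [(eventually_all_finset J).2 hsign] with t ht
  refine ⟨fun i hi => (ht i hi).1, ?_⟩
  ext i
  simp only [mem_signSet]
  exact and_congr_right fun hi => (ht i hi).2

theorem exists_signSet_eq_and_pos {A : AffineSubspace ℝ E} {J : Finset ι} {g : E →ᵃ[ℝ] ℝ}
    {x x₀ : E} (hx : x ∈ A) (hxJ : x ∈ offHyperplanes f J) (hgx : g x = 0) (hx₀ : x₀ ∈ A)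
    (hgx₀ : g x₀ ≠ 0) :
    ∃ y ∈ (A : Set E) ∩ offHyperplanes f J, signSet f J y = signSet f J x ∧ 0 < g y := by
  -- `g (lineMap x x₀ t) = t * g x₀`, so `t = δ * g x₀` with `δ > 0` lands on the positive side
  have hlim : Tendsto (fun δ : ℝ => δ * g x₀) (𝓝[>] 0) (𝓝 0) := by
    simpa using ((continuous_mul_const (g x₀)).tendsto 0).mono_left nhdsWithin_le_nhds
  obtain ⟨δ, ⟨hJ, hsign⟩, hδ⟩ :=
    ((hlim.eventually (eventually_lineMap_mem_offHyperplanes hxJ x₀)).and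
      self_mem_nhdsWithin).exists
  refine ⟨_, ⟨AffineMap.lineMap_mem _ hx hx₀, hJ⟩, hsign, ?_⟩
  rw [AffineMap.apply_lineMap, AffineMap.lineMap_apply_ring', hgx, sub_zero, add_zero, mul_assoc]
  exact mul_pos hδ (mul_self_pos.2 hgx₀)

theorem exists_mem_offHyperplanes [DecidableEq ι] {A : AffineSubspace ℝ E}
    (hA : (A : Set E).Nonempty) (J : Finset ι) (hJ : ∀ j ∈ J, ∃ x ∈ A, f j x ≠ 0) :
    ((A : Set E) ∩ offHyperplanes f J).Nonempty := by
  induction J using Finset.induction_on with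
  | empty => simpa [offHyperplanes] using hA
  | insert p J _ ih =>
    obtain ⟨z, hzA, hzJ⟩ := ih fun j hj => hJ j (mem_insert_of_mem hj)
    by_cases hpz : f p z = 0
    · obtain ⟨w, hwA, hpw⟩ := hJ p (mem_insert_self p J)
      obtain ⟨y, ⟨hyA, hyJ⟩, -, hpy⟩ := exists_signSet_eq_and_pos hzA hzJ hpz hwA hpw
      exact ⟨y, hyA, mem_offHyperplanes_insert.2 ⟨hpy.ne', hyJ⟩⟩
    · exact ⟨z, hzA, mem_offHyperplanes_insert.2 ⟨hpz, hzJ⟩⟩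

theorem chamberSigns_subset_powerset (I : Finset ι) (S : Set E) :
    chamberSigns f I S ⊆ I.powerset := by
  rintro _ ⟨x, -, rfl⟩
  exact mem_powerset.2 (filter_subset _ _)

theorem finite_chamberSigns (I : Finset ι) (S : Set E) : (chamberSigns f I S).Finite :=
  I.powerset.finite_toSet.subset (chamberSigns_subset_powerset I S)

theorem chamberSigns_insert [DecidableEq ι] (p : ι) (I : Finset ι) (S : Set E) :
    chamberSigns f (insert p I) S = insert p '' chamberSigns f I (S ∩ {y | 0 < f p y}) ∪
      chamberSigns f I (S ∩ {y | f p y < 0}) := by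
  ext T
  constructor
  · rintro ⟨y, ⟨hyS, hy⟩, rfl⟩
    rw [mem_offHyperplanes_insert] at hy
    rcases hy.1.lt_or_gt with hneg | hpos
    · exact Or.inr ⟨y, ⟨⟨hyS, hneg⟩, hy.2⟩, by rw [signSet_insert, if_neg hneg.not_gt]⟩
    · exact Or.inl ⟨_, ⟨y, ⟨⟨hyS, hpos⟩, hy.2⟩, rfl⟩, by rw [signSet_insert, if_pos hpos]⟩
  · rintro (⟨_, ⟨y, ⟨⟨hyS, hpos : 0 < f p y⟩, hy⟩, rfl⟩, rfl⟩ |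
      ⟨y, ⟨⟨hyS, hneg : f p y < 0⟩, hy⟩, rfl⟩)
    · exact ⟨y, ⟨hyS, mem_offHyperplanes_insert.2 ⟨hpos.ne', hy⟩⟩,
        by rw [signSet_insert, if_pos hpos]⟩
    · exact ⟨y, ⟨hyS, mem_offHyperplanes_insert.2 ⟨hneg.ne, hy⟩⟩,
        by rw [signSet_insert, if_neg hneg.not_gt]⟩

theorem ncard_chamberSigns_insert_eq_pos_add_neg [DecidableEq ι] {p : ι} {I : Finset ι} (hp : p ∉ I)
    (S : Set E) :
    (chamberSigns f (insert p I) S).ncard = (chamberSigns f I (S ∩ {y | 0 < f p y})).ncard +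
      (chamberSigns f I (S ∩ {y | f p y < 0})).ncard := by
  have hnotMem : ∀ S' : Set E, ∀ T ∈ chamberSigns f I S', p ∉ T := fun S' T hT hpT =>
    hp (mem_powerset.1 (chamberSigns_subset_powerset I S' hT) hpT)
  have hinj : InjOn (insert p) (chamberSigns f I (S ∩ {y | 0 < f p y})) :=
    fun T₁ h₁ T₂ h₂ h => by
      rw [← erase_insert (hnotMem _ T₁ h₁), ← erase_insert (hnotMem _ T₂ h₂), h]
  have hdisj : Disjoint (insert p '' chamberSigns f I (S ∩ {y | 0 < f p y}))
      (chamberSigns f I (S ∩ {y | f p y < 0})) :=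
    Set.disjoint_left.2 fun _ ⟨_, _, hT⟩ h => hnotMem _ _ h (hT ▸ mem_insert_self _ _)
  rw [chamberSigns_insert, Set.ncard_union_eq hdisj ((finite_chamberSigns _ _).image _)
    (finite_chamberSigns _ _), hinj.ncard_image]

theorem chamberSigns_pos_union_neg {A : AffineSubspace ℝ E} {I : Finset ι} {g : E →ᵃ[ℝ] ℝ}
    {x₀ : E} (hx₀ : x₀ ∈ A) (hgx₀ : g x₀ ≠ 0) :
    chamberSigns f I (A ∩ {y | 0 < g y}) ∪ chamberSigns f I (A ∩ {y | g y < 0}) =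
      chamberSigns f I A := by
  refine Subset.antisymm (union_subset ?_ ?_) ?_
  · exact image_mono (inter_subset_inter_left _ inter_subset_left)
  · exact image_mono (inter_subset_inter_left _ inter_subset_left)
  rintro _ ⟨x, ⟨hxA, hxI⟩, rfl⟩
  rcases lt_trichotomy (g x) 0 with hneg | hzero | hpos
  · exact Or.inr ⟨x, ⟨⟨hxA, hneg⟩, hxI⟩, rfl⟩
  · obtain ⟨y, ⟨hyA, hyI⟩, hsign, hpos⟩ := exists_signSet_eq_and_pos hxA hxI hzero hx₀ hgx₀
    exact Or.inl ⟨y, ⟨⟨hyA, hpos⟩, hyI⟩, hsign⟩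
  · exact Or.inl ⟨x, ⟨⟨hxA, hpos⟩, hxI⟩, rfl⟩

theorem exists_lineMap_eq_zero {g : E →ᵃ[ℝ] ℝ} {x y : E} (hx : g x < 0) (hy : 0 < g y) :
    ∃ t ∈ Icc (0 : ℝ) 1, g (AffineMap.lineMap x y t) = 0 := by
  simpa using intermediate_value_Icc zero_le_one (g.continuous_apply_lineMap x y).continuousOn
    (show (0 : ℝ) ∈ Icc (g (AffineMap.lineMap x y (0 : ℝ))) (g (AffineMap.lineMap x y (1 : ℝ)))
      by simpa using ⟨hx.le, hy.le⟩)

theorem chamberSigns_pos_inter_neg [DecidableEq ι] {A : AffineSubspace ℝ E} {I : Finset ι}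
    {g : E →ᵃ[ℝ] ℝ} {x₀ : E} (hx₀ : x₀ ∈ A) (hgx₀ : g x₀ ≠ 0) :
    chamberSigns f I (A ∩ {y | 0 < g y}) ∩ chamberSigns f I (A ∩ {y | g y < 0}) =
      chamberSigns f I (A ⊓ hyperplane g : AffineSubspace ℝ E) := by
  ext T
  constructor
  · rintro ⟨⟨x, ⟨⟨hxA, hgx : 0 < g x⟩, hxI⟩, rfl⟩, ⟨y, ⟨⟨hyA, hgy : g y < 0⟩, hyI⟩, hxy⟩⟩
    obtain ⟨t, ht, hzero⟩ := exists_lineMap_eq_zero hgy hgx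
    have hz : AffineMap.lineMap y x t ∈ cell f I (signSet f I x) :=
      (convex_cell I _).lineMap_mem (hxy ▸ mem_cell_signSet hyI) (mem_cell_signSet hxI) ht
    refine ⟨_, ⟨⟨AffineMap.lineMap_mem _ hyA hxA, mem_hyperplane.2 hzero⟩,
      cell_subset_offHyperplanes _ _ hz⟩, signSet_eq_of_mem_cell (signSet_subset _ _) hz⟩
  · rintro ⟨x, ⟨⟨hxA, hgx⟩, hxI⟩, rfl⟩
    rw [SetLike.mem_coe, mem_hyperplane] at hgx
    obtain ⟨y, ⟨hyA, hyI⟩, hy, hpos⟩ := exists_signSet_eq_and_pos hxA hxI hgx hx₀ hgx₀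
    obtain ⟨z, ⟨hzA, hzI⟩, hz, hneg⟩ := exists_signSet_eq_and_pos (g := -g) hxA hxI
      (by simp [hgx]) hx₀ (by simpa using hgx₀)
    exact ⟨⟨y, ⟨⟨hyA, hpos⟩, hyI⟩, hy⟩, ⟨z, ⟨⟨hzA, neg_pos.1 hneg⟩, hzI⟩, hz⟩⟩

theorem ncard_chamberSigns_insert [DecidableEq ι] {A : AffineSubspace ℝ E} {p : ι}
    {I : Finset ι} (hp : p ∉ I) {x₀ : E} (hx₀ : x₀ ∈ A) (hpx₀ : f p x₀ ≠ 0) :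
    (chamberSigns f (insert p I) A).ncard = (chamberSigns f I A).ncard +
      (chamberSigns f I (A ⊓ hyperplane (f p) : AffineSubspace ℝ E)).ncard := by
  rw [ncard_chamberSigns_insert_eq_pos_add_neg hp, ← chamberSigns_pos_union_neg hx₀ hpx₀,
    ← chamberSigns_pos_inter_neg hx₀ hpx₀,
    Set.ncard_union_add_ncard_inter _ _ (finite_chamberSigns _ _) (finite_chamberSigns _ _)]

theorem IsGenericOn.of_insert [DecidableEq ι] {p : ι} {I : Finset ι} {A : Set E} {d : ℕ}
    (hp : p ∉ I) (h : IsGenericOn f (insert p I) A d) : IsGenericOn f I A d where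
  exists_zeroSet_eq s hs hcard := by
    obtain ⟨x, hxA, hx⟩ := h.exists_zeroSet_eq s (hs.trans (subset_insert p I)) hcard
    refine ⟨x, hxA, ?_⟩
    rw [zeroSet_insert] at hx
    split_ifs at hx
    · exact absurd (hs (hx ▸ mem_insert_self p _)) hp
    · exact hx
  card_zeroSet_le x hx :=
    (Finset.card_le_card (filter_subset_filter _ (subset_insert p I))).trans
      (h.card_zeroSet_le x hx)

theorem IsGenericOn.restrict [DecidableEq ι] {p : ι} {I : Finset ι} {A : AffineSubspace ℝ E}
    {d : ℕ} (hp : p ∉ I) (h : IsGenericOn f (insert p I) A (d + 1)) :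
    IsGenericOn f I (A ⊓ hyperplane (f p) : AffineSubspace ℝ E) d where
  exists_zeroSet_eq s hs hcard := by
    have hps : p ∉ s := fun hps => hp (hs hps)
    obtain ⟨x, hxA, hx⟩ := h.exists_zeroSet_eq (insert p s) (insert_subset_insert p hs)
      (by rw [card_insert_of_notMem hps]; omega)
    have hpx : f p x = 0 := (mem_zeroSet.1 (hx ▸ mem_insert_self p s)).2
    refine ⟨x, ⟨hxA, mem_hyperplane.2 hpx⟩, ?_⟩
    rw [zeroSet_insert, if_pos hpx] at hx
    rw [← erase_insert fun h => hp (zeroSet_subset I x h), hx, erase_insert hps]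
  card_zeroSet_le x hx := by
    have hpx : f p x = 0 := mem_hyperplane.1 hx.2
    have := h.card_zeroSet_le x hx.1
    rw [zeroSet_insert, if_pos hpx, card_insert_of_notMem fun h => hp (zeroSet_subset I x h)]
      at this
    omega

theorem IsGenericOn.ncard_chamberSigns [DecidableEq ι] {I : Finset ι}
    {A : AffineSubspace ℝ E} {d : ℕ} (h : IsGenericOn f I A d) :
    (chamberSigns f I A).ncard = ∑ k ∈ range (d + 1), I.card.choose k := by
  induction I using Finset.induction_on generalizing A d with
  | empty =>
    obtain ⟨x, hx, -⟩ := h.exists_zeroSet_eq ∅ (empty_subset _) (by simp)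
    have : chamberSigns f ∅ A = {∅} := by
      ext T
      simpa [chamberSigns, signSet, offHyperplanes, eq_comm] using fun _ => ⟨x, hx⟩
    simp [this, sum_range_succ']
  | insert p I hp ih =>
    obtain ⟨x₀, hx₀, hzero⟩ := h.exists_zeroSet_eq ∅ (empty_subset _) (by simp)
    have hpx₀ : f p x₀ ≠ 0 := fun hpx =>
      notMem_empty p (hzero ▸ mem_zeroSet.2 ⟨mem_insert_self p I, hpx⟩)
    rw [ncard_chamberSigns_insert hp hx₀ hpx₀, ih (h.of_insert hp), card_insert_of_notMem hp,
      Nat.sum_range_succ_choose_succ]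
    congr 1
    cases d with
    | zero =>
      rw [sum_range_zero, Set.ncard_eq_zero (finite_chamberSigns _ _)]
      refine Set.eq_empty_of_forall_notMem ?_
      rintro _ ⟨x, ⟨⟨hxA, hpx⟩, -⟩, -⟩
      have := h.card_zeroSet_le x hxA
      rw [Nat.le_zero, card_eq_zero] at this
      exact notMem_empty p (this ▸ mem_zeroSet.2 ⟨mem_insert_self p I, mem_hyperplane.1 hpx⟩)
    | succ d => exact ih (h.restrict hp)

theorem isGenericOn_top_of_solvable [DecidableEq ι] {I : Finset ι} {d : ℕ}
    (hsolve : ∀ s ⊆ I, s.card ≤ d → ∀ c : ι → ℝ, ∃ x, ∀ i ∈ s, f i x = c i)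
    (hbound : ∀ x, (zeroSet f I x).card ≤ d) :
    IsGenericOn f I (⊤ : AffineSubspace ℝ E) d where
  exists_zeroSet_eq s hs hcard := by
    obtain ⟨x, hx⟩ := hsolve s hs hcard 0
    rcases hcard.lt_or_eq with hlt | heq
    · let Z : AffineSubspace ℝ E := ⨅ i ∈ s, hyperplane (f i)
      have hZ : ∀ y, y ∈ Z ↔ ∀ i ∈ s, f i y = 0 := by
        simp [Z, AffineSubspace.mem_iInf_iff]
      have hoff : ∀ j ∈ I \ s, ∃ z ∈ Z, f j z ≠ 0 := by
        intro j hj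
        rw [Finset.mem_sdiff] at hj
        obtain ⟨z, hz⟩ := hsolve (insert j s) (insert_subset hj.1 hs)
          (by rw [card_insert_of_notMem hj.2]; omega) (Pi.single j 1)
        refine ⟨z, (hZ z).2 fun i hi => ?_, ?_⟩
        · rw [hz i (mem_insert_of_mem hi), Pi.single_eq_of_ne (ne_of_mem_of_not_mem hi hj.2)]
        · rw [hz j (mem_insert_self j s), Pi.single_eq_same]
          exact one_ne_zero
      obtain ⟨y, hyZ, hy⟩ := exists_mem_offHyperplanes ⟨x, (hZ x).2 hx⟩ (I \ s) hoff
      refine ⟨y, trivial, ?_⟩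
      ext i
      rw [mem_zeroSet]
      constructor
      · rintro ⟨hi, hyi⟩
        by_contra his
        exact hy i (Finset.mem_sdiff.2 ⟨hi, his⟩) hyi
      · exact fun his => ⟨hs his, (hZ y).1 hyZ i his⟩
    · exact ⟨x, trivial, (eq_of_subset_of_card_le (fun i hi => mem_zeroSet.2 ⟨hs hi, hx i hi⟩)
        (heq ▸ hbound x)).symm⟩
  card_zeroSet_le x _ := hbound x

section Topology

variable [DecidableEq ι] [TopologicalSpace E] [IsTopologicalAddGroup E] [ContinuousSMul ℝ E]
  {I : Finset ι}

theorem connectedComponentIn_offHyperplanes (hf : ∀ i ∈ I, Continuous (f i)) {x : E}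
    (hx : x ∈ offHyperplanes f I) :
    connectedComponentIn (offHyperplanes f I) x = cell f I (signSet f I x) := by
  refine Subset.antisymm (fun y hy => ?_)
    ((convex_cell I _).isPreconnected.subset_connectedComponentIn (mem_cell_signSet hx)
      (cell_subset_offHyperplanes I _))
  have hyS := connectedComponentIn_subset _ _ hy
  have hsign : signSet f I y = signSet f I x := by
    ext i
    simp only [mem_signSet]
    refine and_congr_right fun hi => ?_
    have hC : IsPreconnected (connectedComponentIn (offHyperplanes f I) x) :=
      isPreconnected_connectedComponentIn
    have h0 : ∀ z ∈ connectedComponentIn (offHyperplanes f I) x, f i z ≠ 0 :=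
      fun z hz => connectedComponentIn_subset _ _ hz i hi
    exact ⟨hC.pos_of_forall_ne_zero (hf i hi).continuousOn h0 hy (mem_connectedComponentIn hx),
      hC.pos_of_forall_ne_zero (hf i hi).continuousOn h0 (mem_connectedComponentIn hx) hy⟩
  exact hsign ▸ mem_cell_signSet hyS

theorem ncard_connectedComponentIn_offHyperplanes (hf : ∀ i ∈ I, Continuous (f i)) :
    {C : Set E | ∃ x ∈ offHyperplanes f I,
      C = connectedComponentIn (offHyperplanes f I) x}.ncard = (chamberSigns f I univ).ncard := by
  have hC : {C : Set E | ∃ x ∈ offHyperplanes f I,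
      C = connectedComponentIn (offHyperplanes f I) x} = cell f I '' chamberSigns f I univ := by
    ext C
    constructor
    · rintro ⟨x, hx, rfl⟩
      exact ⟨_, ⟨x, ⟨trivial, hx⟩, rfl⟩, (connectedComponentIn_offHyperplanes hf hx).symm⟩
    · rintro ⟨_, ⟨x, ⟨-, hx⟩, rfl⟩, rfl⟩
      exact ⟨x, hx, (connectedComponentIn_offHyperplanes hf hx).symm⟩
  rw [hC, InjOn.ncard_image]
  rintro _ ⟨x, ⟨-, hx⟩, rfl⟩ _ ⟨y, ⟨-, hy⟩, rfl⟩ hxy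
  exact (signSet_eq_of_mem_cell (signSet_subset _ _) (hxy ▸ mem_cell_signSet hy)).symm

end Topology

end HyperplaneArrangement

open HyperplaneArrangement in
theorem general_position_region_count_general (m n : ℕ) (hmn : m ≤ n)
    (a : Fin n → Fin m → ℝ) (b : Fin n → ℝ)
    (hGP : ∀ s : Finset (Fin n), s.card = m →
      LinearIndependent ℝ (fun i : s => a (i : Fin n)))
    (hpt : ∀ x : Fin m → ℝ, {i : Fin n | ∑ j, a i j * x j = b i}.ncard ≤ m) :
    {C : Set (Fin m → ℝ) |
        ∃ x ∈ {x : Fin m → ℝ | ∀ i, ∑ j, a i j * x j ≠ b i},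
          C = connectedComponentIn {x : Fin m → ℝ | ∀ i, ∑ j, a i j * x j ≠ b i} x}.ncard
      = ∑ i ∈ Finset.range (m + 1), n.choose i := by
  let f : Fin n → (Fin m → ℝ) →ᵃ[ℝ] ℝ := fun i =>
    (dotProductBilin ℝ ℝ (a i)).toAffineMap - AffineMap.const ℝ _ (b i)
  have hf : ∀ i x, f i x = ∑ j, a i j * x j - b i := fun _ _ => rfl
  have hS : {x : Fin m → ℝ | ∀ i, ∑ j, a i j * x j ≠ b i} = offHyperplanes f univ := by
    ext x
    simp [offHyperplanes, hf, sub_ne_zero]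
  have hgen : IsGenericOn f univ (⊤ : AffineSubspace ℝ (Fin m → ℝ)) m := by
    refine isGenericOn_top_of_solvable (fun s _ hs c => ?_) fun x => ?_
    · obtain ⟨x, hx⟩ := exists_forall_dotProduct_eq (κ := Fin m) (by simpa using hmn)
        (by simpa using hGP) (by simpa using hs) (c + b)
      exact ⟨x, fun i hi => by simpa [hf, dotProduct] using congrArg (· - b i) (hx i hi)⟩
    · rw [← Set.ncard_coe_finset]
      convert hpt x using 2
      ext i
      simp [mem_zeroSet, hf, sub_eq_zero]
  rw [hS, ncard_connectedComponentIn_offHyperplanes fun i _ =>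
    (f i).continuous_of_finiteDimensional, ← AffineSubspace.top_coe ℝ, hgen.ncard_chamberSigns,
    card_univ, Fintype.card_fin]

/-- An arrangement of `n ≥ m` hyperplanes in `ℝ^m` in general position (every `m` of the
normals linearly independent and no point on more than `m` hyperplanes) has exactly
`∑_{i=0}^{m} C(n,i)` regions. -/
theorem general_position_region_count (m n : ℕ) (hm : 1 ≤ m) (hmn : m ≤ n)
    (a : Fin n → Fin m → ℝ) (b : Fin n → ℝ) (ha : ∀ i, a i ≠ 0)
    (hGP : ∀ s : Finset (Fin n), s.card = m →
      LinearIndependent ℝ (fun i : s => a (i : Fin n)))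
    (hpt : ∀ x : Fin m → ℝ, {i : Fin n | ∑ j, a i j * x j = b i}.ncard ≤ m) :
    {C : Set (Fin m → ℝ) |
        ∃ x ∈ {x : Fin m → ℝ | ∀ i, ∑ j, a i j * x j ≠ b i},
          C = connectedComponentIn {x : Fin m → ℝ | ∀ i, ∑ j, a i j * x j ≠ b i} x}.ncard
      = ∑ i ∈ Finset.range (m + 1), n.choose i :=
  general_position_region_count_general m n hmn a b hGP hpt
end
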